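/- arXiv:2309.00292 — 3 statements merged into one kernel-verified Lean document; each statement's English description precedes it below -/
import Mathlib

section
/- For every collective of type (1,0) (a single compassless automaton) on the square lattice of width 2 and every initial configuration, the movement of the collective is not directed: there exists an implementation of its behaviour that is not directed. -/
/-- Vertices of the square lattice of width 2: `E = ℤ × {0,1}`. -/
abbrev V : Type := ℤ × Fin 2

/-- Two vertices are neighbours iff they agree in one coordinate and differ by
exactly 1 in the other.  (In the second coordinate, which lives in `{0,1}`,
"differ by exactly 1" is the same as being distinct.) -/
def nbr (u v : V) : Prop :=
  (u.2 = v.2 ∧ |u.1 - v.1| = 1) ∨ (u.1 = v.1 ∧ u.2 ≠ v.2)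

/-- The multiset of the three neighbours of a vertex. -/
def nbrs (v : V) : Multiset V :=
  {(v.1 - 1, v.2), (v.1 + 1, v.2), (v.1, v.2 + 1)}

/-- The set of members of the collective located at vertex `v`,
given the positions `p` of the `n` members. -/
def occ {n : ℕ} (p : Fin n → V) (v : V) : Finset (Fin n) :=
  Finset.univ.filter fun i => p i = v

/-- The compassless observation made from vertex `v`: the set of members at `v`,
together with the unordered multiset of the sets of members at the three
neighbouring vertices.  No directional information is carried. -/
def obs {n : ℕ} (p : Fin n → V) (v : V) :
    Finset (Fin n) × Multiset (Finset (Fin n)) :=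
  (occ p v, (nbrs v).map (occ p))

/-- A collective of type `(1, m)`: one finite automaton (member `0`) and `m`
pebbles (members `1, …, m`).  The automaton has a finite state set `Q`,
an initial state `q₀`, a transition function `φ` and an output function `ψ`
(`none` = stay, `some y` = move to a neighbouring vertex whose set of members is
exactly `y`; in particular `some ∅` = move to a free neighbouring vertex).
Each pebble has a single internal state, so it is described by its output
function `ρ` alone: on a given observation it either stays (`false`) or,
provided it is on the same vertex as the automaton and the automaton makes a
move, follows the automaton to its new vertex (`true`). -/
structure Collective (m : ℕ) where
  Q : Type
  finQ : Fintype Q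
  q₀ : Q
  φ : Q → Finset (Fin (m + 1)) × Multiset (Finset (Fin (m + 1))) → Q
  ψ : Q → Finset (Fin (m + 1)) × Multiset (Finset (Fin (m + 1))) →
        Option (Finset (Fin (m + 1)))
  ρ : Fin (m + 1) → Finset (Fin (m + 1)) × Multiset (Finset (Fin (m + 1))) → Bool

/-- One (nondeterministic) simultaneous step of the collective `A`, from
configuration `c` to configuration `c'`.  A configuration is an internal state
of the automaton together with the positions of all members. -/
def Step {m : ℕ} (A : Collective m)
    (c c' : A.Q × (Fin (m + 1) → V)) : Prop :=
  let p := c.2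
  let x := obs p (p 0)
  -- state update
  c'.1 = A.φ c.1 x ∧
  -- move of the automaton (member 0)
  ((A.ψ c.1 x = none ∧ c'.2 0 = p 0) ∨
    (∃ y, A.ψ c.1 x = some y ∧
      ((c'.2 0 ∈ nbrs (p 0) ∧ occ p (c'.2 0) = y) ∨
        (c'.2 0 = p 0 ∧ ∀ v ∈ nbrs (p 0), occ p v ≠ y)))) ∧
  -- moves of the pebbles: a pebble moves to the automaton's new vertex iff its
  -- output says so, it is on the automaton's (old) vertex, and the automaton
  (∀ i : Fin (m + 1), i ≠ 0 →
    ((A.ρ i (obs p (p i)) = true ∧ p i = p 0 ∧ c'.2 0 ≠ p 0) →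
        c'.2 i = c'.2 0) ∧
    (¬(A.ρ i (obs p (p i)) = true ∧ p i = p 0 ∧ c'.2 0 ≠ p 0) →
        c'.2 i = p i))

/-- An implementation of the behaviour of the collective `A` from the initial
positions `p₀` (and the initial internal state `A.q₀`): an infinite sequence of
configurations, each obtained from the previous one by one simultaneous step,
with all nondeterministic choices resolved arbitrarily. -/
def Implementation {m : ℕ} (A : Collective m) (p₀ : Fin (m + 1) → V)
    (c : ℕ → A.Q × (Fin (m + 1) → V)) : Prop :=
  c 0 = (A.q₀, p₀) ∧ ∀ t : ℕ, Step A (c t) (c (t + 1))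

/-- The coordinate of the collective: the average of the positions of its
members, as a point of `ℚ²`. -/
def coord {m : ℕ} (p : Fin (m + 1) → V) : ℚ × ℚ :=
  ((∑ i, ((p i).1 : ℚ)) / (m + 1), (∑ i, (((p i).2 : ℕ) : ℚ)) / (m + 1))

/-- The diameter of the collective: the maximum absolute difference of any
coordinate between positions of any two members. -/
def diam {m : ℕ} (p : Fin (m + 1) → V) : ℕ :=
  Finset.univ.sup fun ik : Fin (m + 1) × Fin (m + 1) =>
    max ((p ik.1).1 - (p ik.2).1).natAbs
      ((((p ik.1).2 : ℕ) : ℤ) - (((p ik.2).2 : ℕ) : ℤ)).natAbs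

/-- An implementation is directed if there are constants `c₁, c₂ ∈ ℕ` such that
the diameter is at most `c₁` at every time `t`, and for every `t` there exist
`1 ≤ t', t'' ≤ c₂` with `v(t+t') − v(t) = v(t+t'+t'') − v(t+t') ≠ (0,0)`. -/
def DirectedImpl {m : ℕ} (A : Collective m)
    (c : ℕ → A.Q × (Fin (m + 1) → V)) : Prop :=
  ∃ c₁ c₂ : ℕ, (∀ t : ℕ, diam (c t).2 ≤ c₁) ∧
    ∀ t : ℕ, ∃ t' t'' : ℕ, 1 ≤ t' ∧ t' ≤ c₂ ∧ 1 ≤ t'' ∧ t'' ≤ c₂ ∧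
      coord (c (t + t')).2 - coord (c t).2 =
        coord (c (t + t' + t'')).2 - coord (c (t + t')).2 ∧
      coord (c (t + t')).2 - coord (c t).2 ≠ (0, 0)

/-!
A lone automaton always makes the same observation (itself, and three empty neighbours), so
the sequence of its states and outputs does not depend on where it is. Resolving every move to a
free vertex by stepping to the vertical neighbour keeps it in its initial column, so its
coordinate takes only two values. A two-point set of `ℚ²` contains no three-term arithmetic
progression with nonzero difference, which a directed implementation would need.
-/

theorem threeAPFree_pair {M : Type*} [AddCommMonoid M] [IsCancelAdd M] [IsAddTorsionFree M]
    (u w : M) : ThreeAPFree ({u, w} : Set M) := by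
  refine threeAPFree_insert.2 ⟨threeAPFree_singleton w, ?_, ?_⟩
  · rintro _ rfl _ rfl h
    exact add_right_cancel h
  · rintro _ rfl _ rfl h
    exact nsmul_right_injective two_ne_zero (by simpa only [two_nsmul] using h)

theorem Collective.not_directedImpl_of_threeAPFree {m : ℕ} (A : Collective m)
    {c : ℕ → A.Q × (Fin (m + 1) → V)} {s : Set (ℚ × ℚ)} (hs : ThreeAPFree s)
    (hc : ∀ t, coord (c t).2 ∈ s) : ¬ DirectedImpl A c := by
  rintro ⟨_, _, -, hdir⟩
  obtain ⟨t', t'', -, -, -, -, hAP, hne⟩ := hdir 0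
  rw [sub_eq_sub_iff_add_eq_add] at hAP
  exact hne (sub_eq_zero.2 (hs (hc _) (hc _) (hc (0 + t' + t'')) (by rw [add_comm, hAP])).symm)

theorem ne_of_mem_nbrs {v w : V} (h : w ∈ nbrs v) : w ≠ v := by
  simp only [nbrs, Multiset.insert_eq_cons, Multiset.mem_cons, Multiset.mem_singleton] at h
  rcases h with rfl | rfl | rfl <;> simp [Prod.ext_iff]

def vertNbr (v : V) : V := (v.1, v.2 + 1)

theorem vertNbr_mem_nbrs (v : V) : vertNbr v ∈ nbrs v := by
  simp [vertNbr, nbrs]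

theorem occ_single_self (p : Fin 1 → V) : occ p (p 0) = Finset.univ := by
  ext i
  simp [occ, Subsingleton.elim i 0]

theorem occ_single_of_ne (p : Fin 1 → V) {v : V} (h : v ≠ p 0) : occ p v = ∅ := by
  ext i
  simp [occ, Subsingleton.elim i 0, Ne.symm h]

def loneObs : Finset (Fin 1) × Multiset (Finset (Fin 1)) :=
  (Finset.univ, Multiset.replicate 3 ∅)

theorem obs_single_self (p : Fin 1 → V) : obs p (p 0) = loneObs := by
  have hnbrs : ∀ w ∈ nbrs (p 0), occ p w = ∅ := fun _ hw =>
    occ_single_of_ne p (ne_of_mem_nbrs hw)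
  refine Prod.ext (occ_single_self p) ?_
  rw [obs, Multiset.map_congr rfl hnbrs, Multiset.map_const']
  rfl

namespace Collective

/-- The adversary's resolution of the nondeterminism: every move to a free vertex goes to the
vertical neighbour. -/
def verticalStep (A : Collective 0) (c : A.Q × (Fin 1 → V)) : A.Q × (Fin 1 → V) :=
  (A.φ c.1 loneObs, if A.ψ c.1 loneObs = some ∅ then fun _ => vertNbr (c.2 0) else c.2)

theorem step_verticalStep (A : Collective 0) (c : A.Q × (Fin 1 → V)) :
    Step A c (verticalStep A c) := by
  refine ⟨by rw [obs_single_self]; rfl, ?_, fun i hi => absurd (Fin.fin_one_eq_zero i) hi⟩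
  simp only [obs_single_self]
  rcases hψ : A.ψ c.1 loneObs with _ | y
  · exact Or.inl ⟨rfl, by simp [verticalStep, hψ]⟩
  refine Or.inr ⟨y, rfl, ?_⟩
  by_cases hy : y = ∅
  · subst hy
    have hmove : (verticalStep A c).2 0 = vertNbr (c.2 0) := by simp [verticalStep, hψ]
    rw [hmove]
    exact Or.inl ⟨vertNbr_mem_nbrs _, occ_single_of_ne _ (ne_of_mem_nbrs (vertNbr_mem_nbrs _))⟩
  · refine Or.inr ⟨by simp [verticalStep, hψ, hy], fun v hv => ?_⟩
    rw [occ_single_of_ne _ (ne_of_mem_nbrs hv)]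
    exact Ne.symm hy

theorem verticalStep_column (A : Collective 0) (c : A.Q × (Fin 1 → V)) :
    ((verticalStep A c).2 0).1 = (c.2 0).1 := by
  unfold verticalStep
  split_ifs <;> rfl

def verticalImpl (A : Collective 0) (p₀ : Fin 1 → V) (t : ℕ) : A.Q × (Fin 1 → V) :=
  (verticalStep A)^[t] (A.q₀, p₀)

theorem verticalImpl_succ (A : Collective 0) (p₀ : Fin 1 → V) (t : ℕ) :
    verticalImpl A p₀ (t + 1) = verticalStep A (verticalImpl A p₀ t) :=
  Function.iterate_succ_apply' _ _ _

theorem implementation_verticalImpl (A : Collective 0) (p₀ : Fin 1 → V) :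
    Implementation A p₀ (verticalImpl A p₀) :=
  ⟨rfl, fun t => verticalImpl_succ A p₀ t ▸ step_verticalStep A _⟩

theorem verticalImpl_column (A : Collective 0) (p₀ : Fin 1 → V) (t : ℕ) :
    ((verticalImpl A p₀ t).2 0).1 = (p₀ 0).1 := by
  induction t with
  | zero => rfl
  | succ t ih => rw [verticalImpl_succ, verticalStep_column, ih]

end Collective

theorem coord_mem_column (p : Fin 1 → V) :
    coord p ∈ ({(((p 0).1 : ℚ), 0), (((p 0).1 : ℚ), 1)} : Set (ℚ × ℚ)) := by
  have h : ((p 0).2 : ℕ) = 0 ∨ ((p 0).2 : ℕ) = 1 := by omega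
  rcases h with h | h <;> simp [coord, h]

/-- For every collective of type (1,0) on the square lattice of
width 2 and every initial configuration, the movement of the collective is not
directed: there exists an implementation of its behaviour that is not directed. -/
theorem not_directed_1_0 (A : Collective 0) (p₀ : Fin 1 → V) :
    ∃ c : ℕ → A.Q × (Fin 1 → V),
      Implementation A p₀ c ∧ ¬ DirectedImpl A c := by
  refine ⟨_, A.implementation_verticalImpl p₀, A.not_directedImpl_of_threeAPFree
    (threeAPFree_pair (((p₀ 0).1 : ℚ), 0) (((p₀ 0).1 : ℚ), 1)) fun t => ?_⟩
  simpa only [A.verticalImpl_column p₀ t] using coord_mem_column (A.verticalImpl p₀ t).2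
end

section
/- For every collective of type (1,1) (one compassless automaton and one pebble) on the square lattice of width 2 and every initial configuration, the movement of the collective is not directed: there exists an implementation of its behaviour that is not directed. -/
/-!
The adversary resolves every nondeterministic choice so that the collective never travels.
A free move of the automaton goes to the vertical neighbour, except when the automaton stands
directly above or below the pebble, where it steps to the right. If the automaton and the
pebble ever share a vertex while the pebble is willing to follow, they move together up and
down one column forever. Otherwise the pebble never moves, and the automaton either keeps its
column or, once it reaches the pebble's column `x`, stays in columns `x` and `x + 1`. Either way
each coordinate of the collective eventually takes at most two values, whereas directedness
needs three distinct values in arithmetic progression.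
-/

lemma eventually_mem_or_forall_eq {α : Type*} {f : ℕ → α} {W : Set α}
    (h : ∀ t, f (t + 1) = f t ∨ f (t + 1) ∈ W) :
    (∃ N, ∀ t ≥ N, f t ∈ W) ∨ ∀ t, f t = f 0 := by
  by_cases hW : ∃ N, f N ∈ W
  · obtain ⟨N, hN⟩ := hW
    refine Or.inl ⟨N, fun t ht => ?_⟩
    induction t, ht using Nat.le_induction with
    | base => exact hN
    | succ t _ ih => exact (h t).elim (fun e => e ▸ ih) id
  · rw [not_exists] at hW
    refine Or.inr fun t => ?_
    induction t with
    | zero => rfl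
    | succ t ih => exact (h t).resolve_right (hW _) ▸ ih

lemma sub_eq_zero_of_sub_eq_sub_of_pair {x y z a b : ℚ} (hx : x = a ∨ x = b)
    (hy : y = a ∨ y = b) (hz : z = a ∨ z = b) (h : y - x = z - y) : y - x = 0 := by
  rcases hx with rfl | rfl <;> rcases hy with rfl | rfl <;> rcases hz with rfl | rfl <;> linarith

lemma not_directedImpl_of_two_valued {m : ℕ} {A : Collective m}
    {c : ℕ → A.Q × (Fin (m + 1) → V)} (N : ℕ) {a b a' b' : ℚ}
    (h : ∀ t ≥ N, ((coord (c t).2).1 = a ∨ (coord (c t).2).1 = b) ∧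
      ((coord (c t).2).2 = a' ∨ (coord (c t).2).2 = b')) :
    ¬ DirectedImpl A c := by
  rintro ⟨_, _, _, hdir⟩
  obtain ⟨t', t'', -, -, -, -, hAP, hne⟩ := hdir N
  have h₀ := h N le_rfl
  have h₁ := h (N + t') (by omega)
  have h₂ := h (N + t' + t'') (by omega)
  exact hne (Prod.ext
    (sub_eq_zero_of_sub_eq_sub_of_pair h₀.1 h₁.1 h₂.1 (congrArg Prod.fst hAP))
    (sub_eq_zero_of_sub_eq_sub_of_pair h₀.2 h₁.2 h₂.2 (congrArg Prod.snd hAP)))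

lemma coord_fin_two (p : Fin 2 → V) :
    coord p =
      ((((p 0).1 : ℚ) + (p 1).1) / 2, ((((p 0).2 : ℕ) : ℚ) + ((p 1).2 : ℕ)) / 2) := by
  rw [coord, Fin.sum_univ_two, Fin.sum_univ_two]
  norm_num

lemma cast_fin_two_eq_zero_or_one (r : Fin 2) :
    ((r : ℕ) : ℚ) = 0 ∨ ((r : ℕ) : ℚ) = 1 := by
  fin_cases r <;> simp

lemma fin_two_add_one_ne (r : Fin 2) : r + 1 ≠ r := by
  revert r; decide

lemma mem_nbrs {u v : V} :
    u ∈ nbrs v ↔ u = (v.1 - 1, v.2) ∨ u = (v.1 + 1, v.2) ∨ u = (v.1, v.2 + 1) := by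
  simp [nbrs]

lemma self_notMem_nbrs (v : V) : v ∉ nbrs v := by
  rw [mem_nbrs]
  rintro (h | h | h) <;> rw [Prod.ext_iff] at h
  · omega
  · omega
  · exact fin_two_add_one_ne v.2 h.2.symm

lemma mem_occ {n : ℕ} {p : Fin n → V} {i : Fin n} {v : V} : i ∈ occ p v ↔ p i = v := by
  simp [occ]

lemma occ_eq_empty {p : Fin 2 → V} {v : V} (h₀ : p 0 ≠ v) (h₁ : p 1 ≠ v) :
    occ p v = ∅ := by
  ext i
  fin_cases i <;> simp [mem_occ, h₀, h₁]

lemma occ_of_mem_nbrs {p : Fin 2 → V} {v : V} (hv : v ∈ nbrs (p 0)) :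
    occ p v = ∅ ∨ (p 1 = v ∧ occ p v = {1}) := by
  have h₀ : p 0 ≠ v := fun h => self_notMem_nbrs (p 0) (h ▸ hv)
  by_cases h₁ : p 1 = v
  · refine Or.inr ⟨h₁, ?_⟩
    ext i
    fin_cases i <;> simp [mem_occ, h₀, h₁]
  · exact Or.inl (occ_eq_empty h₀ h₁)

def togetherObs : Finset (Fin 2) × Multiset (Finset (Fin 2)) :=
  (Finset.univ, {∅, ∅, ∅})

lemma obs_of_eq {p : Fin 2 → V} (h : p 0 = p 1) : obs p (p 0) = togetherObs := by
  have hocc : occ p (p 0) = Finset.univ := by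
    ext i
    fin_cases i <;> simp [mem_occ, h]
  have hnbr : ∀ v ∈ nbrs (p 0), occ p v = ∅ := fun v hv =>
    (occ_of_mem_nbrs hv).resolve_right fun ⟨h₁, _⟩ =>
      self_notMem_nbrs (p 0) (by rw [h, h₁]; rwa [h, h₁] at hv)
  rw [obs, togetherObs, hocc, Multiset.map_congr rfl hnbr, Multiset.map_const']
  rfl

def Follows (A : Collective 1) : Prop := A.ρ 1 togetherObs = true

section AdversaryStep

def freeNbr (p : Fin 2 → V) : V :=
  if (p 0).1 = (p 1).1 ∧ p 0 ≠ p 1 then ((p 0).1 + 1, (p 0).2) else ((p 0).1, (p 0).2 + 1)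

lemma freeNbr_mem_nbrs (p : Fin 2 → V) : freeNbr p ∈ nbrs (p 0) := by
  rw [mem_nbrs]; unfold freeNbr; split_ifs <;> simp

lemma occ_freeNbr (p : Fin 2 → V) : occ p (freeNbr p) = ∅ := by
  unfold freeNbr
  split_ifs with h
  · apply occ_eq_empty <;> (intro e; have := congrArg Prod.fst e; dsimp only at this; omega)
  · apply occ_eq_empty
    · intro e
      exact fin_two_add_one_ne _ (congrArg Prod.snd e).symm
    · intro e
      rw [not_and_or, not_not] at h
      rcases h with h | h
      · exact h (congrArg Prod.fst e).symm
      · exact fin_two_add_one_ne _ (congrArg Prod.snd (h ▸ e)).symm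

/-- A nonempty output names a neighbour's set of members, which can only be `{1}`. -/
def moveTarget (o : Option (Finset (Fin 2))) (p : Fin 2 → V) : V :=
  match o with
  | none => p 0
  | some y => if y = ∅ then freeNbr p else if y = {1} ∧ p 1 ∈ nbrs (p 0) then p 1 else p 0

lemma moveTarget_eq_or (o : Option (Finset (Fin 2))) (p : Fin 2 → V) :
    moveTarget o p = p 0 ∨ moveTarget o p = p 1 ∨ moveTarget o p = freeNbr p := by
  unfold moveTarget
  split <;> try split_ifs
  all_goals simp

lemma moveTarget_spec (o : Option (Finset (Fin 2))) (p : Fin 2 → V) :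
    (o = none ∧ moveTarget o p = p 0) ∨
      (∃ y, o = some y ∧
        ((moveTarget o p ∈ nbrs (p 0) ∧ occ p (moveTarget o p) = y) ∨
          (moveTarget o p = p 0 ∧ ∀ v ∈ nbrs (p 0), occ p v ≠ y))) := by
  rcases o with _ | y
  · exact Or.inl ⟨rfl, rfl⟩
  refine Or.inr ⟨y, rfl, ?_⟩
  simp only [moveTarget]
  split_ifs with h₀ h₁
  · exact Or.inl ⟨freeNbr_mem_nbrs p, h₀ ▸ occ_freeNbr p⟩
  · obtain ⟨rfl, hp⟩ := h₁
    rcases occ_of_mem_nbrs hp with h | ⟨-, h⟩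
    · exact absurd (h ▸ mem_occ.mpr rfl) (Finset.notMem_empty (1 : Fin 2))
    · exact Or.inl ⟨hp, h⟩
  · refine Or.inr ⟨rfl, fun v hv hy => ?_⟩
    rcases occ_of_mem_nbrs hv with h | ⟨rfl, h⟩
    · exact h₀ (hy ▸ h)
    · exact h₁ ⟨hy ▸ h, hv⟩

def adversaryStep (A : Collective 1) (z : A.Q × (Fin 2 → V)) : A.Q × (Fin 2 → V) :=
  let p := z.2
  let u := moveTarget (A.ψ z.1 (obs p (p 0))) p
  (A.φ z.1 (obs p (p 0)),
    ![u, if A.ρ 1 (obs p (p 1)) = true ∧ p 1 = p 0 ∧ u ≠ p 0 then u else p 1])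

variable (A : Collective 1) (z : A.Q × (Fin 2 → V))

lemma adversaryStep_pos_zero :
    (adversaryStep A z).2 0 = moveTarget (A.ψ z.1 (obs z.2 (z.2 0))) z.2 := rfl

lemma adversaryStep_pos_one : (adversaryStep A z).2 1 =
    if A.ρ 1 (obs z.2 (z.2 1)) = true ∧ z.2 1 = z.2 0 ∧ (adversaryStep A z).2 0 ≠ z.2 0
      then (adversaryStep A z).2 0 else z.2 1 := rfl

lemma step_adversaryStep : Step A z (adversaryStep A z) := by
  refine ⟨rfl, moveTarget_spec _ _, fun i hi => ?_⟩
  obtain rfl : i = 1 := Fin.eq_one_of_ne_zero i hi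
  rw [adversaryStep_pos_one]
  exact ⟨fun h => if_pos h, fun h => if_neg h⟩

lemma adversaryStep_pos_one_of_not_follows (h : ¬(z.2 0 = z.2 1 ∧ Follows A)) :
    (adversaryStep A z).2 1 = z.2 1 := by
  rw [adversaryStep_pos_one]
  refine if_neg fun ⟨hρ, h₁, _⟩ => h ⟨h₁.symm, ?_⟩
  rwa [h₁, obs_of_eq h₁.symm] at hρ

lemma adversaryStep_together (hf : Follows A) (h : z.2 0 = z.2 1) :
    (adversaryStep A z).2 0 = (adversaryStep A z).2 1 ∧
      ((adversaryStep A z).2 0).1 = (z.2 0).1 := by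
  have hfree : freeNbr z.2 = ((z.2 0).1, (z.2 0).2 + 1) := if_neg fun h' => h'.2 h
  have hρ : A.ρ 1 (obs z.2 (z.2 1)) = true := by rw [← h, obs_of_eq h]; exact hf
  rw [adversaryStep_pos_one, adversaryStep_pos_zero]
  rcases moveTarget_eq_or (A.ψ z.1 (obs z.2 (z.2 0))) z.2 with ht | ht | ht <;> rw [ht]
  · simp [h]
  · simp [h]
  · rw [hfree, if_pos ⟨hρ, h.symm, fun e => fin_two_add_one_ne _ (congrArg Prod.snd e)⟩]
    exact ⟨rfl, rfl⟩

lemma adversaryStep_col :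
    ((adversaryStep A z).2 0).1 = (z.2 0).1 ∨ ((adversaryStep A z).2 0).1 = (z.2 1).1 ∨
      ((adversaryStep A z).2 0).1 = (z.2 1).1 + 1 := by
  rw [adversaryStep_pos_zero]
  rcases moveTarget_eq_or (A.ψ z.1 (obs z.2 (z.2 0))) z.2 with h | h | h <;> rw [h]
  · exact Or.inl rfl
  · exact Or.inr (Or.inl rfl)
  · unfold freeNbr
    split_ifs with he
    · exact Or.inr (Or.inr (by rw [he.1]))
    · exact Or.inl rfl

end AdversaryStep

def adversaryRun (A : Collective 1) (p₀ : Fin 2 → V) : ℕ → A.Q × (Fin 2 → V)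
  | 0 => (A.q₀, p₀)
  | t + 1 => adversaryStep A (adversaryRun A p₀ t)

section AdversaryRun

variable {A : Collective 1} {p₀ : Fin 2 → V}

lemma implementation_adversaryRun : Implementation A p₀ (adversaryRun A p₀) :=
  ⟨rfl, fun t => step_adversaryStep A (adversaryRun A p₀ t)⟩

lemma not_directedImpl_adversaryRun_of_together {N : ℕ} (hf : Follows A)
    (hN : (adversaryRun A p₀ N).2 0 = (adversaryRun A p₀ N).2 1) :
    ¬ DirectedImpl A (adversaryRun A p₀) := by
  set x := ((adversaryRun A p₀ N).2 0).1
  have htog : ∀ t ≥ N, (adversaryRun A p₀ t).2 0 = (adversaryRun A p₀ t).2 1 ∧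
      ((adversaryRun A p₀ t).2 0).1 = x := by
    intro t ht
    induction t, ht using Nat.le_induction with
    | base => exact ⟨hN, rfl⟩
    | succ t _ ih =>
      have := adversaryStep_together A (adversaryRun A p₀ t) hf ih.1
      exact ⟨this.1, this.2.trans ih.2⟩
  refine not_directedImpl_of_two_valued (a := x) (b := x) (a' := 0) (b' := 1) N
    fun t ht => ?_
  obtain ⟨h₁, hx⟩ := htog t ht
  rw [coord_fin_two, ← h₁, hx]
  rcases cast_fin_two_eq_zero_or_one ((adversaryRun A p₀ t).2 0).2 with hr | hr <;> simp [hr]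

lemma adversaryRun_pebble_eq
    (h : ∀ t, ¬((adversaryRun A p₀ t).2 0 = (adversaryRun A p₀ t).2 1 ∧ Follows A))
    (t : ℕ) : (adversaryRun A p₀ t).2 1 = p₀ 1 := by
  induction t with
  | zero => rfl
  | succ t ih => exact (adversaryStep_pos_one_of_not_follows A _ (h t)).trans ih

lemma not_directedImpl_adversaryRun_of_pebble_eq
    (hP : ∀ t, (adversaryRun A p₀ t).2 1 = p₀ 1) :
    ¬ DirectedImpl A (adversaryRun A p₀) := by
  set P := p₀ 1
  have hcol (t : ℕ) : ((adversaryRun A p₀ (t + 1)).2 0).1 = ((adversaryRun A p₀ t).2 0).1 ∨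
      ((adversaryRun A p₀ (t + 1)).2 0).1 ∈ ({P.1, P.1 + 1} : Set ℤ) := by
    have := adversaryStep_col A (adversaryRun A p₀ t)
    rwa [hP t] at this
  have hrow (t : ℕ) : (coord (adversaryRun A p₀ t).2).2 = (P.2 : ℕ) / 2 ∨
      (coord (adversaryRun A p₀ t).2).2 = (1 + (P.2 : ℕ)) / 2 := by
    rw [coord_fin_two, hP t]
    rcases cast_fin_two_eq_zero_or_one ((adversaryRun A p₀ t).2 0).2 with hr | hr <;> simp [hr]
  rcases eventually_mem_or_forall_eq (f := fun t => ((adversaryRun A p₀ t).2 0).1) hcol with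
    ⟨N, hN⟩ | hconst
  · refine not_directedImpl_of_two_valued (a := ((P.1 : ℚ) + P.1) / 2)
      (b := (((P.1 + 1 : ℤ) : ℚ) + P.1) / 2) N fun t ht => ⟨?_, hrow t⟩
    rw [coord_fin_two, hP t]
    rcases hN t ht with h | h <;> rw [h] <;> simp
  · set a := (((p₀ 0).1 : ℚ) + P.1) / 2
    refine not_directedImpl_of_two_valued (a := a) (b := a) 0 fun t _ => ⟨Or.inl ?_, hrow t⟩
    rw [coord_fin_two, hP t, hconst t]
    rfl

end AdversaryRun

/-- For every collective of type (1,1) on the square lattice of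
width 2 and every initial configuration, the movement of the collective is not
directed: there exists an implementation of its behaviour that is not directed. -/
theorem not_directed_1_1 (A : Collective 1) (p₀ : Fin 2 → V) :
    ∃ c : ℕ → A.Q × (Fin 2 → V),
      Implementation A p₀ c ∧ ¬ DirectedImpl A c := by
  refine ⟨adversaryRun A p₀, implementation_adversaryRun, ?_⟩
  by_cases hmeet : ∃ N, (adversaryRun A p₀ N).2 0 = (adversaryRun A p₀ N).2 1 ∧ Follows A
  · obtain ⟨N, hN, hf⟩ := hmeet
    exact not_directedImpl_adversaryRun_of_together hf hN
  · exact not_directedImpl_adversaryRun_of_pebble_eq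
      (adversaryRun_pebble_eq fun t h => hmeet ⟨t, h⟩)
end

section
/- For every collective of type (1,0) (a single compassless automaton) on the square lattice of width 2 and every initial configuration, there exists an implementation of its behaviour in which the automaton visits at most two vertices: its initial vertex and at most one fixed neighbouring vertex, between which it alternates whenever it moves. -/
lemma occ_const (v x : V) :
    occ (fun _ : Fin 1 => v) x = if v = x then Finset.univ else ∅ := by
  unfold occ; split_ifs with h <;> [simp [Finset.filter_eq_self, h];
    simp [Finset.filter_eq_empty_iff, h]]

lemma mem_nbrs_ne {x v : V} (h : x ∈ nbrs v) : x ≠ v := by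
  simp [nbrs] at h
  rcases h with h | h | h <;> subst h <;> intro hc
  · have h1 := congrArg Prod.fst hc; simp only at h1; omega
  · have h1 := congrArg Prod.fst hc; simp only at h1; omega
  · have h1 := congrArg Prod.snd hc; simp only at h1
    exact (by decide : ∀ b : Fin 2, ¬ b + 1 = b) v.2 h1

lemma occ_nbr {x v : V} (h : x ∈ nbrs v) :
    occ (fun _ : Fin 1 => v) x = ∅ := by
  rw [occ_const, if_neg (Ne.symm (mem_nbrs_ne h))]

/-- The run that alternates between `u` and `w` whenever the automaton moves. -/
def runAux (A : Collective 0) (u w : V) : ℕ → A.Q × V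
  | 0 => (A.q₀, u)
  | t + 1 =>
    let q := (runAux A u w t).1
    let v := (runAux A u w t).2
    let x := obs (fun _ : Fin 1 => v) v
    (A.φ q x, if A.ψ q x = some ∅ then (if v = u then w else u) else v)

lemma runAux_mem (A : Collective 0) (u w : V) :
    ∀ t, (runAux A u w t).2 = u ∨ (runAux A u w t).2 = w := by
  intro t
  induction t with
  | zero => left; rfl
  | succ t ih =>
    simp only [runAux]
    split_ifs <;> tauto

/-- For every collective of type (1,0) (a single compassless
automaton) and every initial configuration, there exists an implementation of
its behaviour in which the automaton visits at most two vertices: its initial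
vertex and at most one fixed neighbouring vertex, between which it alternates
whenever it moves. -/
theorem single_automaton_two_vertices (A : Collective 0) (p₀ : Fin 1 → V) :
    ∃ c : ℕ → A.Q × (Fin 1 → V),
      Implementation A p₀ c ∧
      ∃ w : V, nbr (p₀ 0) w ∧
        ∀ t : ℕ, (c t).2 0 = p₀ 0 ∨ (c t).2 0 = w := by
  set u : V := p₀ 0 with hu
  set w : V := (u.1, u.2 + 1) with hw
  have huw : u ≠ w := by
    intro hc
    have := congrArg Prod.snd hc
    revert this; exact (by decide : ∀ b : Fin 2, ¬ b = b + 1) u.2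
  have hwnbru : w ∈ nbrs u := by simp [nbrs, hw]
  have hunbrw : u ∈ nbrs w := by
    have : u = (w.1, w.2 + 1) := by
      rw [hw]
      exact Prod.ext rfl ((by decide : ∀ b : Fin 2, b = b + 1 + 1) u.2)
    rw [this]; simp [nbrs]
  refine ⟨fun t => ((runAux A u w t).1, fun _ => (runAux A u w t).2), ?_, w, ?_, ?_⟩
  · constructor
    · refine Prod.ext rfl (funext fun i => ?_)
      show u = p₀ i
      rw [hu, Subsingleton.elim (0 : Fin 1) i]
    · intro t
      set q := (runAux A u w t).1
      set v := (runAux A u w t).2 with hv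
      have hmem : v = u ∨ v = w := runAux_mem A u w t
      refine ⟨rfl, ?_, ?_⟩
      · -- movement
        show (A.ψ q (obs (fun _ => v) v) = none ∧ _) ∨ _
        by_cases hψ : A.ψ q (obs (fun _ => v) v) = some ∅
        · right
          refine ⟨∅, hψ, Or.inl ?_⟩
          show (if A.ψ q _ = some ∅ then (if v = u then w else u) else v) ∈ nbrs v ∧
            occ (fun _ => v) (if A.ψ q _ = some ∅ then (if v = u then w else u) else v) = ∅
          rw [if_pos hψ]
          rcases hmem with h | h
          · rw [if_pos h, h]
            exact ⟨hwnbru, occ_nbr (h ▸ hwnbru)⟩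
          · rw [if_neg (h ▸ huw.symm), h]
            exact ⟨hunbrw, occ_nbr (h ▸ hunbrw)⟩
        · have hpos : (runAux A u w (t + 1)).2 = v := by
            show (if A.ψ q _ = some ∅ then _ else v) = v
            rw [if_neg hψ]
          cases hψ' : A.ψ q (obs (fun _ => v) v) with
          | none => exact Or.inl ⟨rfl, hpos⟩
          | some y =>
            right
            refine ⟨y, rfl, Or.inr ⟨hpos, fun x hx => ?_⟩⟩
            rw [occ_nbr hx]
            intro hc
            rw [← hc] at hψ'
            exact hψ hψ'
      · -- pebbles: there are none
        intro i hi
        exact absurd (Fin.ext (by have := i.isLt; omega : i.val = (0 : Fin (0+1)).val)) hi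
  · exact Or.inr ⟨rfl, (by decide : ∀ b : Fin 2, ¬ b = b + 1) u.2⟩
  · exact fun t => runAux_mem A u w t
end
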